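/- Birational promotion cyclically shifts the quotient sequence: for P = [a]×[b] with n = a+b and every f : P → ℝ>0, Q(π_B f) is the leftward cyclic shift of Q(f), i.e. if Q(f) = (q_1, q_2, …, q_n) then Q(π_B f) = (q_2, …, q_n, q_1). -/

import Mathlib

open scoped Classical

noncomputable section

instance {α : Type*} [Fintype α] : Fintype (WithTop α) := inferInstanceAs (Fintype (Option α))
instance {α : Type*} [Fintype α] : Fintype (WithBot α) := inferInstanceAs (Fintype (Option α))

variable {P : Type*} [Fintype P] [PartialOrder P]

/-- The embedding of `P` into `P̂ = WithBot (WithTop P)`, the poset obtained from `P` by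
adjoining a new minimum `⊥` and a new maximum `⊤`. -/
def emb (x : P) : WithBot (WithTop P) := ((x : WithTop P) : WithBot (WithTop P))

/-- Extend `f : P → ℝ` to `P̂` with value `v0` at the new minimum and `v1` at the new maximum. -/
def extendHat (v0 v1 : ℝ) (f : P → ℝ) : WithBot (WithTop P) → ℝ :=
  WithBot.recBotCoe v0 (WithTop.recTopCoe v1 f)

/-- `L`: the maximum of the (extended, with `f(0̂) = 0`) values at elements of `P̂` covered by `x`. -/
def plL (f : P → ℝ) (x : P) : ℝ := sSup (extendHat 0 1 f '' {y | y ⋖ emb x})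

/-- `R`: the minimum of the (extended, with `f(1̂) = 1`) values at elements of `P̂` covering `x`. -/
def plR (f : P → ℝ) (x : P) : ℝ := sInf (extendHat 0 1 f '' {y | emb x ⋖ y})

/-- The piecewise-linear toggle at `x`. -/
def plToggle (x : P) (f : P → ℝ) : P → ℝ :=
  Function.update f x (plL f x + plR f x - f x)

/-- `xs` is a linear extension of `P`: an enumeration of all elements such that
`x_i < x_j` in `P` implies `i < j`. -/
def IsLinearExt (xs : List P) : Prop :=
  xs.Nodup ∧ (∀ x : P, x ∈ xs) ∧ xs.Pairwise fun u v => ¬ v < u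

/-- Piecewise-linear rowmotion along the linear extension `xs = [x₁, …, x_p]`:
the composite `τ_{x₁} ∘ ⋯ ∘ τ_{x_p}` (toggling from top to bottom). -/
def plRow (xs : List P) (f : P → ℝ) : P → ℝ := xs.foldr plToggle f

/-- Membership in the order polytope `O(P)`. -/
def InOrderPolytope (f : P → ℝ) : Prop :=
  Monotone f ∧ ∀ x, 0 ≤ f x ∧ f x ≤ 1

/-- `L`: the sum of the (extended, with `f(0̂) = 1`) values at elements of `P̂` covered by `x`. -/
def bL (f : P → ℝ) (x : P) : ℝ :=
  ∑ y : WithBot (WithTop P), if y ⋖ emb x then extendHat 1 1 f y else 0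

/-- `R`: the parallel sum of the (extended, with `f(1̂) = 1`) values at elements of `P̂`
covering `x`. -/
def bR (f : P → ℝ) (x : P) : ℝ :=
  (∑ y : WithBot (WithTop P), if emb x ⋖ y then (extendHat 1 1 f y)⁻¹ else 0)⁻¹

/-- The birational toggle at `x`. -/
def bToggle (x : P) (f : P → ℝ) : P → ℝ :=
  Function.update f x (bL f x * bR f x / f x)

/-- Birational rowmotion along the linear extension `xs = [x₁, …, x_p]`:
the composite `τ_{x₁} ∘ ⋯ ∘ τ_{x_p}` (toggling from top to bottom). -/
def bRow (xs : List P) (f : P → ℝ) : P → ℝ := xs.foldr bToggle f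

/-- The `k`-th file of `[a] × [b]` (in `Fin a × Fin b` coordinates, where `(i,j) : Fin a × Fin b`
corresponds to `(i+1, j+1) ∈ [a] × [b]`): the condition `j - i = k - a` (1-based). -/
def InFile (a b k : ℕ) (x : Fin a × Fin b) : Prop :=
  ((x.2 : ℤ) - (x.1 : ℤ) = (k : ℤ) - (a : ℤ))

/-- The piecewise-linear file-toggle `τ_k^*`: simultaneously toggle all elements of the `k`-th
file (these toggles commute, and none reads another's value, so this is their composition). -/
def plFileToggle (a b : ℕ) (k : ℕ) (f : Fin a × Fin b → ℝ) : Fin a × Fin b → ℝ :=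
  fun x => if InFile a b k x then plL f x + plR f x - f x else f x

/-- Piecewise-linear promotion `π_P = τ_{n-1}^* ∘ ⋯ ∘ τ_1^*` (file 1 toggled first). -/
def plPromo (a b : ℕ) (f : Fin a × Fin b → ℝ) : Fin a × Fin b → ℝ :=
  (List.range (a + b - 1)).foldl (fun g k => plFileToggle a b (k + 1) g) f

/-- The birational file-toggle `τ_k^*`. -/
def bFileToggle (a b k : ℕ) (f : Fin a × Fin b → ℝ) : Fin a × Fin b → ℝ :=
  fun x => if InFile a b k x then bL f x * bR f x / f x else f x

/-- Birational promotion `π_B = τ_{n-1}^* ∘ ⋯ ∘ τ_1^*` (file 1 toggled first). -/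
def bPromo (a b : ℕ) (f : Fin a × Fin b → ℝ) : Fin a × Fin b → ℝ :=
  (List.range (a + b - 1)).foldl (fun g k => bFileToggle a b (k + 1) g) f

/-- The antipode map `(i, j) ↦ (a + 1 - i, b + 1 - j)` (in 1-based coordinates). -/
def antipode {a b : ℕ} (x : Fin a × Fin b) : Fin a × Fin b := (x.1.rev, x.2.rev)

/-- `p_k`: the product of the values of `f` over the `k`-th file (equal to `1` for `k = 0`
and `k = a + b`, since those files are empty). -/
def fileProd (a b : ℕ) (f : Fin a × Fin b → ℝ) (k : ℕ) : ℝ :=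
  ∏ x : Fin a × Fin b, if InFile a b k x then f x else 1

/-- The quotient sequence `Q(f) = (q_1, …, q_n)`, `q_k = p_k / p_{k-1}`. -/
def quotSeq (a b : ℕ) (f : Fin a × Fin b → ℝ) (k : ℕ) : ℝ :=
  fileProd a b f k / fileProd a b f (k - 1)


/-! Each toggle in file `k` sends `f x` to `L(x) R(x) / f x` and leaves the other files alone, so
after toggling file `k` its product becomes `∏ L(x) R(x) / p_k`. Walking up the chain that forms
file `k`, `R(x)` times `L` of the next element is the product of `f` over the two elements
covering `x`, because `(u + v) (u⁻¹ + v⁻¹)⁻¹ = u v`; the two ends of the chain supply the remaining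
elements of the neighbouring files, so `∏ L(x) R(x) = p_{k-1} p_{k+1}`. Toggling files
`1, …, n - 1` in turn therefore replaces every `p_k` by `p_{k+1} / p_1`, which shifts `Q`.

To make the telescoping mechanical, `[a] × [b]` is placed in `ℤ × ℤ` and functions are extended by
`1` off the rectangle: a file becomes a full diagonal of `ℤ × ℤ`, and walking up the chain becomes
the shift invariance of `∏ᶠ` over `ℤ`. -/

open Function

lemma isMin_iff_forall_not_covBy {α : Type*} [PartialOrder α] [Finite α] {x : α} :
    IsMin x ↔ ∀ p, ¬ p ⋖ x :=
  ⟨fun h _ hp => h.not_lt hp.lt, fun h => by_contra fun hx => by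
    obtain ⟨p, hp⟩ := exists_covBy_of_wellFoundedGT hx; exact h p hp⟩

lemma isMax_iff_forall_not_covBy {α : Type*} [PartialOrder α] [Finite α] {x : α} :
    IsMax x ↔ ∀ p, ¬ x ⋖ p :=
  ⟨fun h _ hp => h.not_lt hp.lt, fun h => by_contra fun hx => by
    obtain ⟨p, hp⟩ := exists_covBy_of_wellFoundedLT hx; exact h p hp⟩

lemma WithTop.isMin_coe_iff {α : Type*} [Preorder α] {x : α} :
    IsMin (x : WithTop α) ↔ IsMin x :=
  ⟨fun h _ hy => WithTop.coe_le_coe.1 (h (WithTop.coe_le_coe.2 hy)), IsMin.withTop⟩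

lemma sum_withBot_withTop {α : Type*} [Fintype α] (φ : WithBot (WithTop α) → ℝ) :
    ∑ y, φ y = φ ⊥ + φ (⊤ : WithTop α) + ∑ p, φ (emb p) := by
  rw [add_assoc]
  exact (Fintype.sum_option φ).trans (congrArg _ (Fintype.sum_option _))

@[simp] lemma extendHat_bot {α : Type*} (v0 v1 : ℝ) (f : α → ℝ) : extendHat v0 v1 f ⊥ = v0 := rfl

@[simp] lemma extendHat_coe_top {α : Type*} (v0 v1 : ℝ) (f : α → ℝ) :
    extendHat v0 v1 f (⊤ : WithTop α) = v1 := rfl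

@[simp] lemma extendHat_emb {α : Type*} (v0 v1 : ℝ) (f : α → ℝ) (x : α) :
    extendHat v0 v1 f (emb x) = f x := rfl

lemma bL_eq (f : P → ℝ) (x : P) :
    bL f x = (if IsMin x then 1 else 0) + ∑ p, if p ⋖ x then f p else 0 := by
  have hbot : ⊥ ⋖ emb x ↔ IsMin x := WithBot.bot_covBy_coe.trans WithTop.isMin_coe_iff
  have htop : ¬ ((⊤ : WithTop P) : WithBot (WithTop P)) ⋖ emb x :=
    fun h => not_top_lt (WithBot.coe_lt_coe.1 h.lt)
  have hemb : ∀ p, emb p ⋖ emb x ↔ p ⋖ x :=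
    fun p => WithBot.coe_covBy_coe.trans WithTop.coe_covBy_coe
  rw [bL, sum_withBot_withTop]
  simp only [hbot, htop, hemb, if_false, add_zero, extendHat_bot, extendHat_emb]

lemma bR_eq (f : P → ℝ) (x : P) :
    bR f x = ((if IsMax x then 1 else 0) + ∑ p, if x ⋖ p then (f p)⁻¹ else 0)⁻¹ := by
  have hbot : ¬ emb x ⋖ ⊥ := fun h => not_lt_bot h.lt
  have htop : emb x ⋖ ((⊤ : WithTop P) : WithBot (WithTop P)) ↔ IsMax x :=
    WithBot.coe_covBy_coe.trans WithTop.coe_covBy_top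
  have hemb : ∀ p, emb x ⋖ emb p ↔ x ⋖ p :=
    fun p => WithBot.coe_covBy_coe.trans WithTop.coe_covBy_coe
  rw [bR, sum_withBot_withTop]
  simp only [hbot, htop, hemb, if_false, zero_add, inv_one, extendHat_coe_top, extendHat_emb]

lemma ite_add_sum_ite_pos {α : Type*} [Fintype α] {c : Prop} [Decidable c] {s : α → Prop}
    [DecidablePred s] {w : α → ℝ} (hw : ∀ p, 0 < w p) (h : c ∨ ∃ p, s p) :
    0 < (if c then 1 else 0) + ∑ p, if s p then w p else 0 := by
  have hterm : ∀ p, 0 ≤ if s p then w p else 0 := fun p => by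
    split_ifs
    exacts [(hw p).le, le_rfl]
  rcases h with hc | ⟨p, hp⟩
  · rw [if_pos hc]
    linarith [Finset.sum_nonneg fun p (_ : p ∈ Finset.univ) => hterm p]
  · refine add_pos_of_nonneg_of_pos (by split_ifs <;> norm_num) ?_
    exact Finset.sum_pos' (fun p _ => hterm p) ⟨p, Finset.mem_univ p, by simp [hp, hw p]⟩

lemma bL_pos {f : P → ℝ} (hf : ∀ x, 0 < f x) (x : P) : 0 < bL f x := by
  rw [bL_eq]
  exact ite_add_sum_ite_pos hf (or_iff_not_imp_left.2 fun hx => exists_covBy_of_wellFoundedGT hx)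

lemma bR_pos {f : P → ℝ} (hf : ∀ x, 0 < f x) (x : P) : 0 < bR f x := by
  rw [bR_eq, inv_pos]
  exact ite_add_sum_ite_pos (fun p => inv_pos.2 (hf p))
    (or_iff_not_imp_left.2 fun hx => exists_covBy_of_wellFoundedLT hx)

@[to_additive]
lemma prod_ite_eq_extend {α β M : Type*} [Fintype α] [CommMonoid M] {g : α → β}
    (hg : Injective g) (φ : α → M) (y : β) :
    ∏ x, (if g x = y then φ x else 1) = extend g φ 1 y := by
  by_cases hy : ∃ x, g x = y
  · obtain ⟨x, rfl⟩ := hy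
    simp [hg.eq_iff, hg.extend_apply]
  · rw [extend_apply' _ _ _ hy]
    exact Finset.prod_eq_one fun x _ => if_neg fun hx => hy ⟨x, hx⟩

section Rectangle

variable {a b : ℕ}

def intCoords (x : Fin a × Fin b) : ℤ × ℤ := (x.1, x.2)

lemma intCoords_injective : Injective (intCoords : Fin a × Fin b → ℤ × ℤ) := by
  intro x y h
  simp only [intCoords, Prod.ext_iff, Nat.cast_inj] at h
  exact Prod.ext (Fin.ext h.1) (Fin.ext h.2)

lemma extend_intCoords (φ : Fin a × Fin b → ℝ) (e : ℤ × ℤ → ℝ) (x : Fin a × Fin b) :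
    extend intCoords φ e ((x.1 : ℤ), (x.2 : ℤ)) = φ x :=
  intCoords_injective.extend_apply φ e x

abbrev rect (a b : ℕ) : Set (ℤ × ℤ) := Set.range (intCoords : Fin a × Fin b → ℤ × ℤ)

lemma mem_rect {p : ℤ × ℤ} : p ∈ rect a b ↔ 0 ≤ p.1 ∧ p.1 < a ∧ 0 ≤ p.2 ∧ p.2 < b := by
  constructor
  · rintro ⟨x, rfl⟩
    simp only [intCoords]
    omega
  · rintro ⟨h1, h2, h3, h4⟩
    exact ⟨(⟨p.1.toNat, by omega⟩, ⟨p.2.toNat, by omega⟩),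
      Prod.ext (Int.toNat_of_nonneg h1) (Int.toNat_of_nonneg h3)⟩

lemma covBy_iff_intCoords_eq_add {x p : Fin a × Fin b} :
    x ⋖ p ↔ intCoords p = ((x.1 : ℤ) + 1, (x.2 : ℤ))
      ∨ intCoords p = ((x.1 : ℤ), (x.2 : ℤ) + 1) := by
  simp only [Prod.covBy_iff, Fin.covBy_iff, Nat.covBy_iff_add_one_eq, intCoords, Prod.ext_iff,
    Fin.ext_iff]
  omega

lemma covBy_iff_intCoords_eq_sub {p x : Fin a × Fin b} :
    p ⋖ x ↔ intCoords p = ((x.1 : ℤ) - 1, (x.2 : ℤ))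
      ∨ intCoords p = ((x.1 : ℤ), (x.2 : ℤ) - 1) := by
  simp only [Prod.covBy_iff, Fin.covBy_iff, Nat.covBy_iff_add_one_eq, intCoords, Prod.ext_iff,
    Fin.ext_iff]
  omega

lemma isMin_iff_intCoords (x : Fin a × Fin b) :
    IsMin x ↔ ((x.1 : ℤ) - 1, (x.2 : ℤ)) ∉ rect a b ∧ ((x.1 : ℤ), (x.2 : ℤ) - 1) ∉ rect a b := by
  simp only [isMin_iff_forall_not_covBy, covBy_iff_intCoords_eq_sub, Set.mem_range, not_exists,
    not_or, forall_and]

lemma isMax_iff_intCoords (x : Fin a × Fin b) :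
    IsMax x ↔ ((x.1 : ℤ) + 1, (x.2 : ℤ)) ∉ rect a b ∧ ((x.1 : ℤ), (x.2 : ℤ) + 1) ∉ rect a b := by
  simp only [isMax_iff_forall_not_covBy, covBy_iff_intCoords_eq_add, Set.mem_range, not_exists,
    not_or, forall_and]

lemma sum_ite_covBy_eq_extend_sub (φ : Fin a × Fin b → ℝ) (x : Fin a × Fin b) :
    ∑ p, (if p ⋖ x then φ p else 0) = extend intCoords φ 0 ((x.1 : ℤ) - 1, (x.2 : ℤ))
      + extend intCoords φ 0 ((x.1 : ℤ), (x.2 : ℤ) - 1) := by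
  rw [← sum_ite_eq_extend intCoords_injective, ← sum_ite_eq_extend intCoords_injective,
    ← Finset.sum_add_distrib]
  refine Finset.sum_congr rfl fun p _ => ?_
  rw [covBy_iff_intCoords_eq_sub]
  simp only [intCoords, Prod.ext_iff]
  split_ifs <;> first | (exfalso; omega) | ring

lemma sum_ite_covBy_eq_extend_add (φ : Fin a × Fin b → ℝ) (x : Fin a × Fin b) :
    ∑ p, (if x ⋖ p then φ p else 0) = extend intCoords φ 0 ((x.1 : ℤ) + 1, (x.2 : ℤ))
      + extend intCoords φ 0 ((x.1 : ℤ), (x.2 : ℤ) + 1) := by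
  rw [← sum_ite_eq_extend intCoords_injective, ← sum_ite_eq_extend intCoords_injective,
    ← Finset.sum_add_distrib]
  refine Finset.sum_congr rfl fun p _ => ?_
  rw [covBy_iff_intCoords_eq_add]
  simp only [intCoords, Prod.ext_iff]
  split_ifs <;> first | (exfalso; omega) | ring

lemma extend_bL {g : Fin a × Fin b → ℝ} {i j : ℤ} (h : (i, j) ∈ rect a b) :
    extend intCoords (bL g) 1 (i, j)
      = (if (i - 1, j) ∉ rect a b ∧ (i, j - 1) ∉ rect a b then 1 else 0)
        + extend intCoords g 0 (i - 1, j) + extend intCoords g 0 (i, j - 1) := by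
  obtain ⟨x, hx⟩ := h
  simp only [intCoords, Prod.mk.injEq] at hx
  obtain ⟨rfl, rfl⟩ := hx
  simp only [extend_intCoords, bL_eq, isMin_iff_intCoords, sum_ite_covBy_eq_extend_sub, add_assoc]

lemma extend_bR {g : Fin a × Fin b → ℝ} {i j : ℤ} (h : (i, j) ∈ rect a b) :
    extend intCoords (bR g) 1 (i, j)
      = ((if (i + 1, j) ∉ rect a b ∧ (i, j + 1) ∉ rect a b then 1 else 0)
        + extend intCoords g⁻¹ 0 (i + 1, j) + extend intCoords g⁻¹ 0 (i, j + 1))⁻¹ := by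
  obtain ⟨x, hx⟩ := h
  simp only [intCoords, Prod.mk.injEq] at hx
  obtain ⟨rfl, rfl⟩ := hx
  simp only [extend_intCoords, bR_eq, isMax_iff_intCoords, sum_ite_covBy_eq_extend_add, add_assoc]
  rfl

/-- At an end of its file an element has at most one lower (upper) neighbour `u`, `v` in the
rectangle, and this turns the sum defining `L` (`R⁻¹`) into a product of extensions by `1`. -/
lemma ite_add_extend_add_extend (φ : Fin a × Fin b → ℝ) {u v : ℤ × ℤ}
    (h : ¬(u ∈ rect a b ∧ v ∈ rect a b)) :
    (if u ∉ rect a b ∧ v ∉ rect a b then 1 else 0) + extend intCoords φ 0 u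
      + extend intCoords φ 0 v = extend intCoords φ 1 u * extend intCoords φ 1 v := by
  simp only [extend_def, Set.mem_range] at h ⊢
  split_ifs <;> simp_all

/-- `(i, j)` and `(i + 1, j + 1)` are consecutive on their file. The bounds on `j - i` say that
the file is nonempty, which rules out a stray factor when neither point lies in the rectangle. -/
lemma extend_bR_mul_extend_bL {g : Fin a × Fin b → ℝ} (hg : ∀ x, 0 < g x) {i j : ℤ}
    (hij : -(a : ℤ) < j - i) (hji : j - i < b) :
    extend intCoords (bR g) 1 (i, j) * extend intCoords (bL g) 1 (i + 1, j + 1)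
      = extend intCoords g 1 (i + 1, j) * extend intCoords g 1 (i, j + 1) := by
  by_cases hp : (i, j) ∈ rect a b <;> by_cases hq : (i + 1, j + 1) ∈ rect a b
  · have hu : (i + 1, j) ∈ rect a b := by simp only [mem_rect] at *; omega
    have hv : (i, j + 1) ∈ rect a b := by simp only [mem_rect] at *; omega
    rw [extend_bR hp, extend_bL hq]
    simp only [add_sub_cancel_right]
    rw [if_neg (by tauto), if_neg (by tauto)]
    obtain ⟨u, hu⟩ := hu
    obtain ⟨v, hv⟩ := hv
    simp only [← hu, ← hv, intCoords_injective.extend_apply, Pi.inv_apply]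
    have := hg u
    have := hg v
    field_simp
    ring
  · have huv : ¬((i + 1, j) ∈ rect a b ∧ (i, j + 1) ∈ rect a b) := by
      simp only [mem_rect] at *; omega
    rw [extend_bR hp, extend_apply' _ _ _ hq, ite_add_extend_add_extend _ huv, ← inv_one,
      extend_inv, inv_one, Pi.one_apply, mul_one]
    simp [mul_comm]
  · have huv : ¬((i + 1, j) ∈ rect a b ∧ (i, j + 1) ∈ rect a b) := by
      simp only [mem_rect] at *; omega
    rw [extend_bL hq, extend_apply' _ _ _ hp, Pi.one_apply, one_mul]
    simp only [add_sub_cancel_right]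
    rw [ite_add_extend_add_extend _ (by tauto), mul_comm]
  · have hu : (i + 1, j) ∉ rect a b := by simp only [mem_rect] at *; omega
    have hv : (i, j + 1) ∉ rect a b := by simp only [mem_rect] at *; omega
    simp only [extend_apply' _ _ _ hp, extend_apply' _ _ _ hq, extend_apply' _ _ _ hu,
      extend_apply' _ _ _ hv, Pi.one_apply]

lemma fileProd_eq_finprod (φ : Fin a × Fin b → ℝ) (k : ℕ) :
    fileProd a b φ k = ∏ᶠ t : ℤ, extend intCoords φ 1 (t, t + ((k : ℤ) - a)) := by
  simp_rw [← prod_ite_eq_extend intCoords_injective]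
  rw [finprod_prod_comm]
  · refine Finset.prod_congr rfl fun x _ => ?_
    rw [finprod_eq_single _ (x.1 : ℤ)]
    · simp only [intCoords, Prod.ext_iff, true_and]
      split_ifs <;> first | rfl | (exfalso; simp only [InFile] at *; omega)
    · intro t ht
      simp only [intCoords, Prod.ext_iff]
      exact if_neg fun h => ht h.1.symm
  · intro x _
    refine (Set.finite_singleton (x.1 : ℤ)).subset fun t ht => ?_
    by_contra hne
    exact ht (if_neg fun h => hne (by simp [intCoords, Prod.ext_iff] at h; simp [h.1]))

lemma hasFiniteMulSupport_extend_line (φ : Fin a × Fin b → ℝ) (c : ℤ) :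
    HasFiniteMulSupport fun t : ℤ => extend intCoords φ 1 (t, t + c) := by
  refine (Set.finite_Ico (0 : ℤ) a).subset fun t ht => ?_
  by_contra hout
  refine ht (extend_apply' _ _ _ fun ⟨x, hx⟩ => hout ?_)
  simp only [intCoords, Prod.ext_iff] at hx
  simp only [Set.mem_Ico]
  omega

lemma fileProd_bL_mul_bR {g : Fin a × Fin b → ℝ} (hg : ∀ x, 0 < g x) {k : ℕ} (hk : 1 ≤ k)
    (hkn : k < a + b) :
    fileProd a b (bL g * bR g) k = fileProd a b g (k - 1) * fileProd a b g (k + 1) := by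
  obtain ⟨c, hc⟩ : ∃ c : ℤ, c = k - a := ⟨_, rfl⟩
  have hminus : ((k - 1 : ℕ) : ℤ) - a = c - 1 := by omega
  have hplus : ((k + 1 : ℕ) : ℤ) - a = c + 1 := by omega
  have hmul : extend intCoords (bL g * bR g) 1
      = extend intCoords (bL g) 1 * extend intCoords (bR g) 1 := by
    rw [← extend_mul, mul_one]
  have shift : ∀ F : ℤ → ℝ, ∏ᶠ t, F (t + 1) = ∏ᶠ t, F t := fun F =>
    finprod_comp_equiv (Equiv.addRight 1)
  have hfinL := hasFiniteMulSupport_extend_line (bL g) c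
  have hfinR := hasFiniteMulSupport_extend_line (bR g) c
  have hfinMinus := hasFiniteMulSupport_extend_line g (c - 1)
  have hfinPlus := hasFiniteMulSupport_extend_line g (c + 1)
  rw [fileProd_eq_finprod, fileProd_eq_finprod, fileProd_eq_finprod, hminus, hplus, ← hc, hmul]
  calc ∏ᶠ t : ℤ, (extend intCoords (bL g) 1 * extend intCoords (bR g) 1) (t, t + c)
      = (∏ᶠ t : ℤ, extend intCoords (bL g) 1 (t + 1, t + 1 + c))
          * ∏ᶠ t : ℤ, extend intCoords (bR g) 1 (t, t + c) :=
        (finprod_mul_distrib hfinL hfinR).trans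
          (congrArg (· * _) (shift fun t => extend intCoords (bL g) 1 (t, t + c)).symm)
    _ = ∏ᶠ t : ℤ, extend intCoords (bR g) 1 (t, t + c)
          * extend intCoords (bL g) 1 (t + 1, t + 1 + c) :=
        (mul_comm _ _).trans
          (finprod_mul_distrib hfinR (hfinL.comp_of_injective (add_left_injective 1))).symm
    _ = ∏ᶠ t : ℤ, extend intCoords g 1 (t + 1, t + 1 + (c - 1))
          * extend intCoords g 1 (t, t + (c + 1)) := by
        refine finprod_congr fun t => ?_
        convert extend_bR_mul_extend_bL hg (i := t) (j := t + c) (by omega) (by omega) using 3 <;>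
          exact Prod.ext (by ring) (by ring)
    _ = (∏ᶠ t : ℤ, extend intCoords g 1 (t, t + (c - 1)))
          * ∏ᶠ t : ℤ, extend intCoords g 1 (t, t + (c + 1)) :=
        (finprod_mul_distrib (hfinMinus.comp_of_injective (add_left_injective 1)) hfinPlus).trans
          (congrArg (· * _) (shift fun t => extend intCoords g 1 (t, t + (c - 1))))

lemma fileProd_zero (φ : Fin a × Fin b → ℝ) : fileProd a b φ 0 = 1 :=
  Finset.prod_eq_one fun x _ => if_neg fun h => by simp only [InFile] at h; omega

lemma fileProd_a_add_b (φ : Fin a × Fin b → ℝ) : fileProd a b φ (a + b) = 1 :=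
  Finset.prod_eq_one fun x _ => if_neg fun h => by simp only [InFile] at h; push_cast at h; omega

lemma fileProd_pos {φ : Fin a × Fin b → ℝ} (hφ : ∀ x, 0 < φ x) (k : ℕ) : 0 < fileProd a b φ k :=
  Finset.prod_pos fun x _ => by split_ifs; exacts [hφ x, one_pos]

lemma bFileToggle_pos {g : Fin a × Fin b → ℝ} (hg : ∀ x, 0 < g x) (k : ℕ) (x : Fin a × Fin b) :
    0 < bFileToggle a b k g x := by
  unfold bFileToggle
  split_ifs
  exacts [div_pos (mul_pos (bL_pos hg x) (bR_pos hg x)) (hg x), hg x]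

lemma fileProd_bFileToggle_of_ne {m k : ℕ} (h : m ≠ k) (g : Fin a × Fin b → ℝ) :
    fileProd a b (bFileToggle a b k g) m = fileProd a b g m := by
  refine Finset.prod_congr rfl fun x _ => ?_
  by_cases hm : InFile a b m x
  · have hk : ¬ InFile a b k x := fun hk => h (by simp only [InFile] at hm hk; omega)
    simp only [bFileToggle, hm, hk, if_true, if_false]
  · simp only [hm, if_false]

lemma fileProd_bFileToggle_self {g : Fin a × Fin b → ℝ} (hg : ∀ x, 0 < g x) {k : ℕ} (hk : 1 ≤ k)
    (hkn : k < a + b) :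
    fileProd a b (bFileToggle a b k g) k
      = fileProd a b g (k - 1) * fileProd a b g (k + 1) / fileProd a b g k := by
  rw [eq_div_iff (fileProd_pos hg k).ne', ← fileProd_bL_mul_bR hg hk hkn, fileProd, fileProd,
    fileProd, ← Finset.prod_mul_distrib]
  refine Finset.prod_congr rfl fun x _ => ?_
  by_cases hx : InFile a b k x
  · simp only [bFileToggle, hx, if_true, Pi.mul_apply, div_mul_cancel₀ _ (hg x).ne']
  · simp only [hx, if_false, mul_one]

def partialPromo (a b t : ℕ) (f : Fin a × Fin b → ℝ) : Fin a × Fin b → ℝ :=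
  (List.range t).foldl (fun g k => bFileToggle a b (k + 1) g) f

lemma partialPromo_succ (t : ℕ) (f : Fin a × Fin b → ℝ) :
    partialPromo a b (t + 1) f = bFileToggle a b (t + 1) (partialPromo a b t f) := by
  rw [partialPromo, List.range_succ, List.foldl_append, List.foldl_cons, List.foldl_nil]
  rfl

lemma partialPromo_pos {f : Fin a × Fin b → ℝ} (hf : ∀ x, 0 < f x) (t : ℕ) :
    ∀ x, 0 < partialPromo a b t f x := by
  induction t with
  | zero => exact hf
  | succ t ih => rw [partialPromo_succ]; exact bFileToggle_pos ih _

lemma fileProd_partialPromo {f : Fin a × Fin b → ℝ} (hf : ∀ x, 0 < f x) {t : ℕ} (ht : t < a + b)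
    (m : ℕ) :
    fileProd a b (partialPromo a b t f) m
      = if m ≤ t then fileProd a b f (m + 1) / fileProd a b f 1 else fileProd a b f m := by
  induction t generalizing m with
  | zero =>
    split_ifs with hm
    · rw [Nat.le_zero.1 hm, fileProd_zero, zero_add, div_self (fileProd_pos hf 1).ne']
    · rfl
  | succ t ih =>
    rw [partialPromo_succ]
    rcases eq_or_ne m (t + 1) with rfl | hm
    · rw [fileProd_bFileToggle_self (partialPromo_pos hf t) (by omega) ht, if_pos le_rfl,
        Nat.add_sub_cancel, ih (by omega), ih (by omega), ih (by omega), if_pos le_rfl,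
        if_neg (by omega), if_neg (by omega)]
      have := (fileProd_pos hf (t + 1)).ne'
      field_simp
    · rw [fileProd_bFileToggle_of_ne hm, ih (by omega)]
      exact if_congr (by omega) rfl rfl

end Rectangle

theorem stmt10_general (a b : ℕ)
    (f : Fin a × Fin b → ℝ) (hf : ∀ x, 0 < f x) :
    ∀ m, 1 ≤ m → m ≤ a + b →
      quotSeq a b (bPromo a b f) m =
        if m = a + b then quotSeq a b f 1 else quotSeq a b f (m + 1) := by
  intro m hm hmn
  have hp : ∀ k, fileProd a b f k ≠ 0 := fun k => (fileProd_pos hf k).ne'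
  have hpromo := fileProd_partialPromo hf (t := a + b - 1) (by omega)
  rw [quotSeq, show bPromo a b f = partialPromo a b (a + b - 1) f from rfl, hpromo, hpromo]
  rcases eq_or_lt_of_le hmn with rfl | hlt
  · rw [if_neg (by omega), if_pos (by omega), if_pos rfl, quotSeq, Nat.sub_add_cancel hm,
      fileProd_a_add_b, fileProd_zero]
    field_simp [hp 1]
  · rw [if_pos (by omega), if_pos (by omega), if_neg hlt.ne, quotSeq, Nat.sub_add_cancel hm,
      Nat.add_sub_cancel]
    field_simp [hp 1, hp m]

/-- Birational promotion cyclically shifts the quotient sequence leftward: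
if `Q(f) = (q_1, …, q_n)` then `Q(π_B f) = (q_2, …, q_n, q_1)`. -/
theorem stmt10 (a b : ℕ) (ha : 1 ≤ a) (hb : 1 ≤ b)
    (f : Fin a × Fin b → ℝ) (hf : ∀ x, 0 < f x) :
    ∀ m, 1 ≤ m → m ≤ a + b →
      quotSeq a b (bPromo a b f) m =
        if m = a + b then quotSeq a b f 1 else quotSeq a b f (m + 1) :=
  stmt10_general a b f hf

end
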